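/- arXiv:1106.6038 — 4 statements merged into one kernel-verified Lean document; each statement's English description precedes it below -/
import Mathlib

section
/- Assume μ(S,x) satisfies ∂μ/∂S > 0 and d'(x) - ∂μ/∂x(S,x) > 0 for all relevant (S,x) (hypothesis H3 case λ₀ < λ₁). Then the equation μ(S,x) = d(x) implicitly defines a strictly increasing function S = φ(x) with φ(0) = λ₀, and since γ(x) = S_in - x d(x)/D is strictly decreasing with γ(0) = S_in, the system φ(x) = γ(x) has exactly one solution x > 0 if λ₀ < S_in, and no solution x ≥ 0 with γ(x) = φ(x) and x > 0 if λ₀ > S_in. -/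
/-!
Along the curve `μ(φ(x), x) = d(x)`, the function `G(S, x) = μ(S, x) - d(x)` increases in `S`
and (by H3) decreases in `x`, so its zero level set is the graph of a strictly increasing
function. Since `x d(x)` increases, `γ` decreases, and `φ - γ` is a strictly increasing
continuous function, negative at `0` when `λ₀ < S_in`. It becomes positive by the time
`x D₁ / D ≥ S_in - λ₀`, because `γ(x) ≤ S_in - x D₁ / D` while `φ(x) ≥ λ₀`; the intermediate
value theorem gives the unique crossing. When `λ₀ > S_in`, `φ > λ₀ > S_in > γ` on `x > 0`.
-/

open Set

lemma strictMonoOn_Ici_of_hasDerivAt_pos {f f' : ℝ → ℝ} {a : ℝ}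
    (hf : ∀ x, HasDerivAt f (f' x) x) (hf' : ∀ x, a < x → 0 < f' x) :
    StrictMonoOn f (Ici a) :=
  strictMonoOn_of_hasDerivWithinAt_pos (convex_Ici a)
    (fun x _ => (hf x).continuousAt.continuousWithinAt) (fun x _ => (hf x).hasDerivWithinAt)
    (by simpa only [interior_Ici, mem_Ioi] using hf')

lemma strictAntiOn_Ici_of_hasDerivAt_neg {f f' : ℝ → ℝ} {a : ℝ}
    (hf : ∀ x, HasDerivAt f (f' x) x) (hf' : ∀ x, a < x → f' x < 0) :
    StrictAntiOn f (Ici a) :=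
  strictAntiOn_of_hasDerivWithinAt_neg (convex_Ici a)
    (fun x _ => (hf x).continuousAt.continuousWithinAt) (fun x _ => (hf x).hasDerivWithinAt)
    (by simpa only [interior_Ici, mem_Ioi] using hf')

lemma strictMonoOn_of_level_set {α β γ : Type*} [Preorder α] [LinearOrder β] [Preorder γ]
    {s : Set α} {G : β → α → γ} {φ : α → β} {c : γ}
    (hG₁ : ∀ x ∈ s, StrictMono (G · x)) (hG₂ : ∀ S, StrictAntiOn (G S) s)
    (hφ : ∀ x ∈ s, G (φ x) x = c) : StrictMonoOn φ s := by
  intro a ha b hb hab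
  by_contra! hba
  have hlt : G (φ a) b < c := hφ a ha ▸ hG₂ (φ a) ha hb hab
  have hle : c ≤ G (φ a) b := hφ b hb ▸ (hG₁ b hb).monotone hba
  exact (hle.trans_lt hlt).false

lemma existsUnique_eq_of_strictMonoOn_of_strictAntiOn {f g : ℝ → ℝ} {a b : ℝ} (hab : a ≤ b)
    (hf : ContinuousOn f (Icc a b)) (hg : ContinuousOn g (Icc a b))
    (hfm : StrictMonoOn f (Ici a)) (hga : StrictAntiOn g (Ici a))
    (ha : f a < g a) (hb : g b ≤ f b) : ∃! x, a < x ∧ f x = g x := by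
  have hmono : StrictMonoOn (f - g) (Ici a) := fun x hx y hy hxy => by
    simp only [Pi.sub_apply]
    linarith [hfm hx hy hxy, hga hx hy hxy]
  obtain ⟨c, hc, hc0⟩ := intermediate_value_Icc hab (hf.sub hg)
    (show (0 : ℝ) ∈ Icc ((f - g) a) ((f - g) b) from
      ⟨(sub_neg.2 ha).le, sub_nonneg.2 hb⟩)
  have hac : a < c := hc.1.lt_of_ne (by rintro rfl; simp only [Pi.sub_apply] at hc0; linarith)
  refine ⟨c, ⟨hac, sub_eq_zero.1 hc0⟩, fun y ⟨hy, hyc⟩ => ?_⟩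
  exact hmono.injOn (mem_Ici.2 hy.le) (mem_Ici.2 hc.1) ((sub_eq_zero.2 hyc).trans hc0.symm)

theorem stmt7_general (μ μS μx : ℝ → ℝ → ℝ) (d d' φ : ℝ → ℝ)
    (D Sin lam0 D₁ : ℝ) (hD : 0 < D)
    -- partial derivatives of μ and derivative of d
    (hμS : ∀ S x, HasDerivAt (fun s => μ s x) (μS S x) S)
    (hμx : ∀ S x, HasDerivAt (fun y => μ S y) (μx S x) x)
    (hd : ∀ x, HasDerivAt d (d' x) x)
    -- sign conditions (H1, H2, H3 in the case λ₀ < λ₁)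
    (hμSpos : ∀ S x, 0 < μS S x)
    (hxd : ∀ x ≥ (0:ℝ), 0 < d x + x * d' x)
    (hdlow : 0 < D₁ ∧ ∀ x ≥ (0:ℝ), D₁ ≤ d x)
    (hH3 : ∀ S x, 0 ≤ x → μx S x < d' x)
    -- φ is defined implicitly by μ(φ(x),x) = d(x), and is continuous
    (hφ : ∀ x ≥ (0:ℝ), μ (φ x) x = d x)
    (hφc : ContinuousOn φ (Ici 0))
    (hφ0 : φ 0 = lam0)
    -- γ
    (γ : ℝ → ℝ) (hγ : ∀ x, γ x = Sin - x * d x / D) :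
    StrictMonoOn φ (Ici 0) ∧
    StrictAntiOn γ (Ici 0) ∧ γ 0 = Sin ∧
    (lam0 < Sin → ∃! x : ℝ, 0 < x ∧ φ x = γ x) ∧
    (Sin < lam0 → ¬ ∃ x : ℝ, 0 < x ∧ φ x = γ x) := by
  obtain ⟨hD₁, hdlow⟩ := hdlow
  have hφmono : StrictMonoOn φ (Ici 0) :=
    strictMonoOn_of_level_set (G := fun S x => μ S x - d x) (c := 0)
      (fun x _ => (strictMono_of_hasDerivAt_pos (hμS · x) (hμSpos · x)).add_const _)
      (fun S => strictAntiOn_Ici_of_hasDerivAt_neg (fun x => (hμx S x).sub (hd x))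
        fun x hx => sub_neg.2 (hH3 S x hx.le))
      (fun x hx => sub_eq_zero.2 (hφ x hx))
  have hγ' : ∀ x, HasDerivAt γ (-(d x + x * d' x) / D) x := fun x => by
    rw [show γ = fun x => Sin - x * d x / D from funext hγ]
    exact ((((hasDerivAt_id' x).fun_mul (hd x)).div_const D).const_sub Sin).congr_deriv (by ring)
  have hγanti : StrictAntiOn γ (Ici 0) := strictAntiOn_Ici_of_hasDerivAt_neg hγ' fun x hx =>
    div_neg_of_neg_of_pos (neg_neg_of_pos (hxd x hx.le)) hD
  have hγ0 : γ 0 = Sin := by simp [hγ]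
  refine ⟨hφmono, hγanti, hγ0, fun hlt => ?_, fun hlt ⟨x, hx, hxeq⟩ => ?_⟩
  · set x₀ := D * (Sin - lam0) / D₁
    have hx₀ : 0 < x₀ := by positivity
    have hγx₀ : γ x₀ ≤ lam0 := by
      calc γ x₀ ≤ Sin - x₀ * D₁ / D := by rw [hγ]; gcongr; exact hdlow x₀ hx₀.le
        _ = lam0 := by simp only [x₀]; field_simp; ring
    exact existsUnique_eq_of_strictMonoOn_of_strictAntiOn hx₀.le (hφc.mono Icc_subset_Ici_self)
      (fun x _ => (hγ' x).continuousAt.continuousWithinAt) hφmono hγanti (by rwa [hφ0, hγ0])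
      (hγx₀.trans (hφ0 ▸ hφmono.monotoneOn self_mem_Ici hx₀.le hx₀.le))
  · linarith [hφmono self_mem_Ici hx.le hx, hγanti self_mem_Ici hx.le hx]

theorem stmt7 (μ μS μx : ℝ → ℝ → ℝ) (d d' φ : ℝ → ℝ)
    (D Sin lam0 D₁ : ℝ) (hD : 0 < D) (hSin : 0 < Sin) (hlam0 : 0 ≤ lam0)
    -- partial derivatives of μ and derivative of d
    (hμS : ∀ S x, HasDerivAt (fun s => μ s x) (μS S x) S)
    (hμx : ∀ S x, HasDerivAt (fun y => μ S y) (μx S x) x)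
    (hd : ∀ x, HasDerivAt d (d' x) x)
    -- sign conditions (H1, H2, H3 in the case λ₀ < λ₁)
    (hμSpos : ∀ S x, 0 < μS S x)
    (hμxneg : ∀ S x, μx S x < 0)
    (hd'neg : ∀ x ≥ (0:ℝ), d' x < 0)
    (hxd : ∀ x ≥ (0:ℝ), 0 < d x + x * d' x)
    (hdD : ∀ x ≥ (0:ℝ), d x ≤ D)
    (hdlow : 0 < D₁ ∧ ∀ x ≥ (0:ℝ), D₁ ≤ d x)
    (hH3 : ∀ S x, 0 ≤ x → μx S x < d' x)
    -- φ is defined implicitly by μ(φ(x),x) = d(x), and is continuous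
    (hφ : ∀ x ≥ (0:ℝ), μ (φ x) x = d x)
    (hφc : ContinuousOn φ (Ici 0))
    (hφ0 : φ 0 = lam0)
    -- γ
    (γ : ℝ → ℝ) (hγ : ∀ x, γ x = Sin - x * d x / D) :
    StrictMonoOn φ (Ici 0) ∧
    StrictAntiOn γ (Ici 0) ∧ γ 0 = Sin ∧
    (lam0 < Sin → ∃! x : ℝ, 0 < x ∧ φ x = γ x) ∧
    (Sin < lam0 → ¬ ∃ x : ℝ, 0 < x ∧ φ x = γ x) :=
  stmt7_general μ μS μx d d' φ D Sin lam0 D₁ hD hμS hμx hd hμSpos hxd hdlow hH3 hφ hφc hφ0 γ hγ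
end

section
/- At a positive equilibrium (S,x) with μ(S,x) = d(x), the determinant of the Jacobian J₁ equals D x (∂μ/∂S)(φ'(x) - γ'(x)), where φ'(x) = (d'(x) - ∂μ/∂x)/(∂μ/∂S) and γ'(x) = -(x d(x))'/D. Consequently, if φ'(x) > γ'(x) the equilibrium is locally asymptotically stable (det > 0 with negative trace), and if φ'(x) < γ'(x) it is a saddle point (det < 0). -/
open Matrix

/-!
The eigenvalues of a real 2×2 matrix are the roots of `z ^ 2 - tr * z + det`. If `det < 0` the two
roots `(tr ± √(tr² - 4 det)) / 2` are real of opposite signs; if `tr < 0 < det` a real root would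
make `z² + det - tr z` positive, while a non-real pair has real part `tr / 2`. For the Jacobian,
`tr = -D - x μ_S + x μ_x - x d'` is negative because `x d' > -d ≥ -D`, and expanding the
determinant gives `D x μ_S (φ' - γ')`.
-/

theorem Matrix.mem_spectrum_iff_fin_two {K : Type*} [Field K] (A : Matrix (Fin 2) (Fin 2) K)
    (z : K) : z ∈ spectrum K A ↔ z ^ 2 - A.trace * z + A.det = 0 := by
  simp [mem_spectrum_iff_isRoot_charpoly, charpoly_fin_two]

theorem Complex.re_neg_of_sq_sub_mul_add_eq_zero {t q : ℝ} (ht : t < 0) (hq : 0 < q) {z : ℂ}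
    (hz : z ^ 2 - t * z + q = 0) : z.re < 0 := by
  have hre : z.re ^ 2 - z.im ^ 2 - t * z.re + q = 0 := by
    simpa [sq, Complex.mul_re] using congrArg Complex.re hz
  have him : z.im * (2 * z.re - t) = 0 := by
    linear_combination (by simpa [sq, Complex.mul_im] using congrArg Complex.im hz :
      z.re * z.im + z.im * z.re - t * z.im = 0)
  rcases mul_eq_zero.mp him with h | h
  · rw [h] at hre
    nlinarith
  · linarith

theorem Matrix.re_neg_of_mem_spectrum_of_trace_neg_of_det_pos (A : Matrix (Fin 2) (Fin 2) ℝ)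
    (ht : A.trace < 0) (hd : 0 < A.det) :
    ∀ z ∈ spectrum ℂ (A.map (algebraMap ℝ ℂ)), z.re < 0 := by
  intro z hz
  rw [mem_spectrum_iff_fin_two, ← AddMonoidHom.map_trace,
    show (A.map (algebraMap ℝ ℂ)).det = algebraMap ℝ ℂ A.det from (RingHom.map_det _ A).symm] at hz
  exact Complex.re_neg_of_sq_sub_mul_add_eq_zero ht hd hz

theorem Matrix.exists_pos_mem_spectrum_and_neg_mem_spectrum_of_det_neg
    (A : Matrix (Fin 2) (Fin 2) ℝ) (hd : A.det < 0) :
    ∃ z ∈ spectrum ℝ A, 0 < z ∧ ∃ w ∈ spectrum ℝ A, w < 0 := by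
  set s := √(A.trace ^ 2 - 4 * A.det)
  have hs : s ^ 2 = A.trace ^ 2 - 4 * A.det := Real.sq_sqrt (by nlinarith)
  have hts : |A.trace| < s := by
    rw [← Real.sqrt_sq_eq_abs]
    exact Real.sqrt_lt_sqrt (sq_nonneg _) (by linarith)
  obtain ⟨hl, hr⟩ := abs_lt.mp hts
  refine ⟨(A.trace + s) / 2, ?_, by linarith, (A.trace - s) / 2, ?_, by linarith⟩ <;>
    rw [mem_spectrum_iff_fin_two] <;> linear_combination hs / 4

theorem det_chemostat_jacobian {D x muS mux dval d' : ℝ} (hD : D ≠ 0) (hmuS : muS ≠ 0) :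
    (!![-D - x * muS, -x * mux - dval; x * muS, x * mux - x * d'] : Matrix (Fin 2) (Fin 2) ℝ).det
      = D * x * muS * ((d' - mux) / muS - -(dval + x * d') / D) := by
  rw [det_fin_two_of]
  field_simp
  ring

theorem trace_chemostat_jacobian_neg {D x muS mux dval d' : ℝ} (hx : 0 < x) (hmuS : 0 < muS)
    (hmux : mux < 0) (hxd : 0 < dval + x * d') (hdD : dval ≤ D) :
    (!![-D - x * muS, -x * mux - dval; x * muS, x * mux - x * d'] :
      Matrix (Fin 2) (Fin 2) ℝ).trace < 0 := by
  rw [trace_fin_two_of]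
  nlinarith [mul_pos hx hmuS, mul_neg_of_pos_of_neg hx hmux]

theorem stmt10_general (D x muval muS mux dval d' : ℝ)
    (hD : 0 < D) (hx : 0 < x)
    (heq : muval = dval)          -- μ(S,x) = d(x) at the positive equilibrium
    (hdD : dval ≤ D)
    (hmuS : 0 < muS)              -- ∂μ/∂S > 0
    (hmux : mux < 0)              -- ∂μ/∂x < 0
    (hxd : 0 < dval + x * d')     -- (x d(x))' > 0
    (φ' γ' : ℝ)
    (hφ' : φ' = (d' - mux) / muS)
    (hγ' : γ' = -(dval + x * d') / D)
    (J₁ : Matrix (Fin 2) (Fin 2) ℝ)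
    (hJ₁ : J₁ = !![-D - x * muS, -x * mux - muval; x * muS, x * mux - x * d']) :
    J₁.det = D * x * muS * (φ' - γ') ∧
    (γ' < φ' → 0 < J₁.det ∧ J₁.trace < 0 ∧
      ∀ z ∈ spectrum ℂ (J₁.map (algebraMap ℝ ℂ)), z.re < 0) ∧
    (φ' < γ' → J₁.det < 0 ∧
      ∃ z ∈ spectrum ℝ J₁, 0 < z ∧ ∃ w ∈ spectrum ℝ J₁, w < 0) := by
  subst heq hφ' hγ' hJ₁
  have hdet := det_chemostat_jacobian (x := x) (mux := mux) (dval := muval) (d' := d')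
    hD.ne' hmuS.ne'
  have hscale : 0 < D * x * muS := by positivity
  refine ⟨hdet, fun hlt => ?_, fun hlt => ?_⟩
  · have hdet_pos := hdet ▸ mul_pos hscale (sub_pos.mpr hlt)
    have htr := trace_chemostat_jacobian_neg hx hmuS hmux hxd hdD
    exact ⟨hdet_pos, htr, re_neg_of_mem_spectrum_of_trace_neg_of_det_pos _ htr hdet_pos⟩
  · have hdet_neg := hdet ▸ mul_neg_of_pos_of_neg hscale (sub_neg.mpr hlt)
    exact ⟨hdet_neg, exists_pos_mem_spectrum_and_neg_mem_spectrum_of_det_neg _ hdet_neg⟩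

theorem stmt10 (D S x muval muS mux dval d' : ℝ)
    (hD : 0 < D) (hx : 0 < x)
    (heq : muval = dval)          -- μ(S,x) = d(x) at the positive equilibrium
    (hdD : dval ≤ D)
    (hmuS : 0 < muS)              -- ∂μ/∂S > 0
    (hmux : mux < 0)              -- ∂μ/∂x < 0
    (hd' : d' < 0)                -- d' < 0
    (hxd : 0 < dval + x * d')     -- (x d(x))' > 0
    (φ' γ' : ℝ)
    (hφ' : φ' = (d' - mux) / muS)
    (hγ' : γ' = -(dval + x * d') / D)
    (J₁ : Matrix (Fin 2) (Fin 2) ℝ)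
    (hJ₁ : J₁ = !![-D - x * muS, -x * mux - muval; x * muS, x * mux - x * d']) :
    J₁.det = D * x * muS * (φ' - γ') ∧
    (γ' < φ' → 0 < J₁.det ∧ J₁.trace < 0 ∧
      ∀ z ∈ spectrum ℂ (J₁.map (algebraMap ℝ ℂ)), z.re < 0) ∧
    (φ' < γ' → J₁.det < 0 ∧
      ∃ z ∈ spectrum ℝ J₁, 0 < z ∧ ∃ w ∈ spectrum ℝ J₁, w < 0) :=
  stmt10_general D x muval muS mux dval d' hD hx heq hdD hmuS hmux hxd φ' γ' hφ' hγ' J₁ hJ₁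
end

section
/- Let A be the (n+1)×(n+1) real matrix with A₀₀ = -D - Σᵢ aᵢ, A₀ᵢ = cᵢ, Aᵢ₀ = aᵢ, Aᵢᵢ = -bᵢ for i = 1..n, and all other entries zero. If D > 0, aᵢ ≥ 0, bᵢ > 0 and cᵢ ≤ bᵢ for all i, then every eigenvalue of A has strictly negative real part. -/
/-! If `A v = z v` with `v ≠ 0` and `Re z ≥ 0`, the lower rows give `vᵢ = aᵢ v₀ / (z + bᵢ)`, so
`v₀ ≠ 0` and the first row becomes the secular equation `z + D + ∑ aᵢ = ∑ cᵢ aᵢ / (z + bᵢ)`.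
Since `Re (z + bᵢ) ≥ bᵢ ≥ cᵢ`, the `i`-th term on the right has real part at most `aᵢ`, so the
real parts of the two sides differ by at least `D > 0`. -/

open Matrix

theorem Matrix.exists_mulVec_eq_smul_of_mem_spectrum {K n : Type*} [Field K] [Fintype n]
    [DecidableEq n] {M : Matrix n n K} {μ : K} (h : μ ∈ spectrum K M) :
    ∃ v ≠ 0, M *ᵥ v = μ • v := by
  rw [← spectrum_toLin', ← Module.End.hasEigenvalue_iff_mem_spectrum] at h
  obtain ⟨v, hv⟩ := h.exists_hasEigenvector
  exact ⟨v, hv.2, by simpa [toLin'_apply] using hv.apply_eq_smul⟩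

theorem Complex.re_mul_inv_re_le_one (w : ℂ) : w.re * w⁻¹.re ≤ 1 := by
  rw [inv_re, mul_div_assoc', ← sq]
  exact div_le_one_of_le₀ (by simpa [normSq_apply, sq] using mul_self_nonneg w.im)
    (normSq_nonneg w)

theorem Complex.re_ofReal_mul_inv_le_one {w : ℂ} {b c : ℝ} (hb : 0 ≤ b) (hbw : b ≤ w.re)
    (hc : c ≤ b) : (c * w⁻¹).re ≤ 1 := by
  have hinv : 0 ≤ w⁻¹.re := by rw [inv_re]; exact div_nonneg (hb.trans hbw) (normSq_nonneg w)
  calc (c * w⁻¹).re = c * w⁻¹.re := re_ofReal_mul c w⁻¹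
    _ ≤ w.re * w⁻¹.re := mul_le_mul_of_nonneg_right (hc.trans hbw) hinv
    _ ≤ 1 := w.re_mul_inv_re_le_one

namespace Matrix

variable {R S ι : Type*} [DecidableEq ι]

def arrowMatrix [Zero R] (d : R) (c a β : ι → R) : Matrix (Unit ⊕ ι) (Unit ⊕ ι) R :=
  fromBlocks (of fun _ _ => d) (of fun _ j => c j) (of fun i _ => a i) (diagonal β)

theorem arrowMatrix_map [NonAssocSemiring R] [NonAssocSemiring S] (f : R →+* S) (d : R)
    (c a β : ι → R) : (arrowMatrix d c a β).map f = arrowMatrix (f d) (f ∘ c) (f ∘ a) (f ∘ β) := by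
  ext (i | i) (j | j) <;> simp [arrowMatrix, diagonal_apply, apply_ite f]

theorem arrowMatrix_mulVec_inl [Fintype ι] [NonUnitalNonAssocSemiring R] (d : R) (c a β : ι → R)
    (v : Unit ⊕ ι → R) :
    (arrowMatrix d c a β *ᵥ v) (.inl ()) = d * v (.inl ()) + ∑ j, c j * v (.inr j) := by
  simp [arrowMatrix, mulVec, dotProduct]

theorem arrowMatrix_mulVec_inr [Fintype ι] [NonUnitalNonAssocSemiring R] (d : R) (c a β : ι → R)
    (v : Unit ⊕ ι → R) (i : ι) :
    (arrowMatrix d c a β *ᵥ v) (.inr i) = a i * v (.inl ()) + β i * v (.inr i) := by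
  simp [arrowMatrix, mulVec, dotProduct, diagonal_apply]

theorem arrowMatrix_secular_eq [Fintype ι] {K : Type*} [Field K] {d z : K} {c a β : ι → K}
    {v : Unit ⊕ ι → K} (hv : arrowMatrix d c a β *ᵥ v = z • v) (hv0 : v ≠ 0)
    (hz : ∀ i, z - β i ≠ 0) : z - d = ∑ i, c i * a i / (z - β i) := by
  have hinr (i : ι) : v (.inr i) = a i * v (.inl ()) / (z - β i) := by
    have := congrFun hv (.inr i)
    rw [arrowMatrix_mulVec_inr] at this
    rw [eq_div_iff (hz i)]
    simp only [Pi.smul_apply, smul_eq_mul] at this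
    linear_combination -this
  have hinl : v (.inl ()) ≠ 0 := by
    refine fun h => hv0 (funext ?_)
    rintro (⟨⟩ | i)
    · exact h
    · simp [hinr, h]
  have hsum : ∑ j, c j * v (.inr j) = (∑ j, c j * a j / (z - β j)) * v (.inl ()) := by
    rw [Finset.sum_mul]
    exact Finset.sum_congr rfl fun j _ => by rw [hinr]; ring
  have := congrFun hv (.inl ())
  rw [arrowMatrix_mulVec_inl, hsum] at this
  simp only [Pi.smul_apply, smul_eq_mul] at this
  exact mul_right_cancel₀ hinl (by linear_combination -this)

end Matrix

theorem stmt11 (n : ℕ) (D : ℝ) (a b c : Fin n → ℝ)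
    (hD : 0 < D) (ha : ∀ i, 0 ≤ a i) (hb : ∀ i, 0 < b i) (hc : ∀ i, c i ≤ b i)
    (A : Matrix (Unit ⊕ Fin n) (Unit ⊕ Fin n) ℝ)
    (hA : ∀ i j, A i j =
      match i, j with
      | Sum.inl _, Sum.inl _ => -D - ∑ k, a k
      | Sum.inl _, Sum.inr j => c j
      | Sum.inr i, Sum.inl _ => a i
      | Sum.inr i, Sum.inr j => if i = j then -b i else 0) :
    ∀ z ∈ spectrum ℂ (A.map (algebraMap ℝ ℂ)), z.re < 0 := by
  have hA' : A = arrowMatrix (-D - ∑ k, a k) c a (-b) := by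
    ext (i | i) (j | j) <;> simp [hA, arrowMatrix, diagonal_apply]
  intro z hz
  by_contra! hre
  obtain ⟨v, hv0, hv⟩ := exists_mulVec_eq_smul_of_mem_spectrum hz
  rw [hA', arrowMatrix_map] at hv
  have hzb (i : Fin n) : z + b i ≠ 0 := fun h => by
    have := congrArg Complex.re h
    simp only [Complex.add_re, Complex.ofReal_re, Complex.zero_re] at this
    linarith [hb i]
  have hsec := arrowMatrix_secular_eq hv hv0 (by simpa using hzb)
  have hterm (i : Fin n) : (c i * a i / (z + b i) : ℂ).re ≤ a i := by
    rw [mul_comm, mul_div_assoc, Complex.re_ofReal_mul]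
    refine mul_le_of_le_one_right (ha i) ?_
    simpa [div_eq_mul_inv] using
      Complex.re_ofReal_mul_inv_le_one (w := z + b i) (hb i).le (by simpa using hre) (hc i)
  have hsec_re := congrArg Complex.re hsec
  simp only [Complex.coe_algebraMap, Complex.ofReal_sub, Complex.ofReal_neg, Complex.ofReal_sum,
    Complex.sub_re, Complex.neg_re, Complex.ofReal_re, Complex.re_sum, Function.comp_apply,
    Pi.neg_apply, sub_neg_eq_add] at hsec_re
  linarith [Finset.sum_le_sum fun i (_ : i ∈ Finset.univ) => hterm i]
end

section
/- With f(S) = 2S/(1+S), g(S) = 1.5 S/(0.8+S), D₀ = D = 1, D₁ = 0.5, a = 4, b = 1, S_in = 0.9, one has λ₁ = g⁻¹(D₁) = 0.4 < S_in = 0.9 < λ₀ = f⁻¹(D₀) = 1, and the system of equations μ(S,x) = d(x), D(S_in - S) = x d(x) — where μ(S,x) = (b f(S) + a x g(S))/(b + a x), d(x) = (b D₀ + a x D₁)/(b + a x) — admits at least two solutions with S ∈ (0, S_in) and x > 0. -/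
/-!
The first equilibrium equation `μ(S, x) = d(x)` is linear in `x` once the common denominator
`1 + 4x` is cleared, so for `0.4 < S < 1` it has the unique solution `x = biomass S > 0`.
Substituting it into the mass balance `0.9 - S = x d(x)` leaves the quartic `balanceDefect S = 0`,
which changes sign on `[0.5, 0.6]` and again on `[0.7, 0.85]`; the intermediate value theorem
gives two distinct roots, hence two positive equilibria.
-/

open Set

noncomputable def biomass (S : ℝ) : ℝ := (1 - S) * (0.8 + S) / (4 * (1 + S) * (S - 0.4))

/-- Writing `biomass S = N / M`, this is `5 M² ((0.9 - S)(1 + 4x) - x(1 + 2x))` at `x = N / M`. -/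
def balanceDefect (S : ℝ) : ℝ :=
  32 * (0.9 - S) * (2 * S + 1) * (1 + S) * (S - 0.4) - 10 * S * (1 - S) * (0.8 + S) * (S + 1.4)

lemma biomass_pos {S : ℝ} (hS : S ∈ Ioo 0.4 1) : 0 < biomass S := by
  obtain ⟨hl, hr⟩ := hS
  unfold biomass
  apply div_pos <;> apply mul_pos <;> linarith

lemma growth_eq_removal_at_biomass {S : ℝ} (hS : S ∈ Ioo 0.4 1) :
    2 * S / (1 + S) + 4 * biomass S * (1.5 * S / (0.8 + S)) = 1 + 4 * biomass S * 0.5 := by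
  obtain ⟨hl, hr⟩ := hS
  have h1 : 1 + S ≠ 0 := by linarith
  have h2 : 0.8 + S ≠ 0 := by linarith
  have h3 : S - 0.4 ≠ 0 := by linarith
  unfold biomass
  field_simp
  ring

lemma mass_balance_at_biomass {S : ℝ} (hS : S ∈ Ioo 0.4 1) (h : balanceDefect S = 0) :
    (0.9 - S) * (1 + 4 * biomass S) = biomass S * (1 + 4 * biomass S * 0.5) := by
  obtain ⟨hl, hr⟩ := hS
  have h1 : 1 + S ≠ 0 := by linarith
  have h3 : S - 0.4 ≠ 0 := by linarith
  unfold balanceDefect at h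
  unfold biomass
  field_simp
  linear_combination h / 20

lemma continuous_balanceDefect : Continuous balanceDefect := by
  unfold balanceDefect
  fun_prop

lemma exists_balanceDefect_root_mem_Icc_half :
    ∃ S ∈ Icc (0.5 : ℝ) 0.6, balanceDefect S = 0 :=
  intermediate_value_Icc (by norm_num) continuous_balanceDefect.continuousOn
    ⟨by norm_num [balanceDefect], by norm_num [balanceDefect]⟩

lemma exists_balanceDefect_root_mem_Icc_seven_tenths :
    ∃ S ∈ Icc (0.7 : ℝ) 0.85, balanceDefect S = 0 :=
  intermediate_value_Icc' (by norm_num) continuous_balanceDefect.continuousOn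
    ⟨by norm_num [balanceDefect], by norm_num [balanceDefect]⟩

theorem stmt19 (f g : ℝ → ℝ) (D D₀ D₁ a b Sin : ℝ)
    (hf : ∀ S, f S = 2 * S / (1 + S)) (hg : ∀ S, g S = 1.5 * S / (0.8 + S))
    (hD₀ : D₀ = 1) (hD : D = 1) (hD₁ : D₁ = 0.5) (ha : a = 4) (hb : b = 1)
    (hSin : Sin = 0.9)
    (μ : ℝ → ℝ → ℝ) (hμ : ∀ S x, μ S x = (b * f S + a * x * g S) / (b + a * x))
    (d : ℝ → ℝ) (hd : ∀ x, d x = (b * D₀ + a * x * D₁) / (b + a * x)) :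
    -- λ₁ = g⁻¹(D₁) = 0.4 < Sin = 0.9 < λ₀ = f⁻¹(D₀) = 1
    g 0.4 = D₁ ∧ f 1 = D₀ ∧ (0.4 : ℝ) < Sin ∧ Sin < 1 ∧
    -- there are at least two positive equilibria
    ∃ S₁ x₁ S₂ x₂ : ℝ,
      S₁ ∈ Ioo 0 Sin ∧ S₂ ∈ Ioo 0 Sin ∧ 0 < x₁ ∧ 0 < x₂ ∧
      μ S₁ x₁ = d x₁ ∧ D * (Sin - S₁) = x₁ * d x₁ ∧
      μ S₂ x₂ = d x₂ ∧ D * (Sin - S₂) = x₂ * d x₂ ∧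
      (S₁, x₁) ≠ (S₂, x₂) := by
  subst hD₀ hD hD₁ ha hb hSin
  have equilibrium : ∀ S ∈ Ioo (0.4 : ℝ) 1, balanceDefect S = 0 →
      μ S (biomass S) = d (biomass S) ∧ 1 * (0.9 - S) = biomass S * d (biomass S) := by
    intro S hS hroot
    have hden : (1 : ℝ) + 4 * biomass S ≠ 0 := by linarith [biomass_pos hS]
    rw [hμ, hd, hf, hg, one_mul, one_mul, one_mul, growth_eq_removal_at_biomass hS]
    refine ⟨rfl, ?_⟩
    rw [mul_div_assoc', eq_div_iff hden]
    exact mass_balance_at_biomass hS hroot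
  obtain ⟨S₁, ⟨hS₁l, hS₁r⟩, hroot₁⟩ := exists_balanceDefect_root_mem_Icc_half
  obtain ⟨S₂, ⟨hS₂l, hS₂r⟩, hroot₂⟩ := exists_balanceDefect_root_mem_Icc_seven_tenths
  have hS₁ : S₁ ∈ Ioo (0.4 : ℝ) 1 := ⟨by linarith, by linarith⟩
  have hS₂ : S₂ ∈ Ioo (0.4 : ℝ) 1 := ⟨by linarith, by linarith⟩
  refine ⟨by norm_num [hg], by norm_num [hf], by norm_num, by norm_num, S₁, biomass S₁, S₂,
    biomass S₂, ⟨by linarith, by linarith⟩, ⟨by linarith, by linarith⟩, biomass_pos hS₁,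
    biomass_pos hS₂, equilibrium S₁ hS₁ hroot₁ |>.1, equilibrium S₁ hS₁ hroot₁ |>.2,
    equilibrium S₂ hS₂ hroot₂ |>.1, equilibrium S₂ hS₂ hroot₂ |>.2, ?_⟩
  intro h
  linarith [congrArg Prod.fst h]
end
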